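/- Let F be a field of prime characteristic q, let n ≥ 2, let y ∈ F with y ≠ 0, and let x ∈ {1, -1} ⊆ F. Then the multiplicative order of the n×n Zhang–Liu matrix Q(y,x) equals q: Q(y,x)^q = I and Q(y,x)^k ≠ I for all 1 ≤ k < q. -/

import Mathlib

open Matrix Finset

/-- Generalized Pascal matrix of the first kind: with 1-based indexing the (i,j) entry is
`y^(j-i) * binom(j-1, i-1)` for `j ≥ i` and `0` otherwise. Here indices are 0-based. -/
def pascal1 {R : Type*} [CommRing R] (n : ℕ) (y : R) : Matrix (Fin n) (Fin n) R :=
  Matrix.of fun i j => if i ≤ j then y ^ (j.val - i.val) * (Nat.choose j.val i.val : R) else 0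

/-- Zhang–Liu matrix: with 1-based indexing the (i,j) entry is
`y^(j-i) * x^(i+j-2) * binom(j-1, i-1)` for `j ≥ i` and `0` otherwise. Indices 0-based here. -/
def zhangLiu {R : Type*} [CommRing R] (n : ℕ) (y x : R) : Matrix (Fin n) (Fin n) R :=
  Matrix.of fun i j =>
    if i ≤ j then y ^ (j.val - i.val) * x ^ (i.val + j.val) * (Nat.choose j.val i.val : R) else 0

/-- `D(α)` : the diagonal matrix with (i,i) entry `α^(i-1)` (1-based), i.e. `α^i` 0-based. -/
def diagD {R : Type*} [CommRing R] (n : ℕ) (α : R) : Matrix (Fin n) (Fin n) R :=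
  Matrix.diagonal fun i : Fin n => α ^ i.val

/-! The Zhang–Liu matrix is a diagonal conjugate of the generalized Pascal matrix,
`Q(y,x) = D(x) P(y) D(x)`, and `D(x)² = D(x²) = 1` when `x = ±1`. The Pascal matrices form a
one-parameter group, `P(y) P(z) = P(y + z)`, by the binomial theorem together with
`C(j,m) C(m,i) = C(j,i) C(j-i,m-i)`. Hence `Q(y,x)^k = Q(k y, x)`, which is `1` when `q ∣ k`,
while for `0 < k < q` its `(1,2)` entry `k y x` is nonzero. -/

section

variable {R : Type*} [CommRing R]

lemma pascal1_apply (n : ℕ) (y : R) (i j : Fin n) :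
    pascal1 n y i j = y ^ (j.val - i.val) * (j.val.choose i.val : R) := by
  by_cases h : i ≤ j
  · simp [pascal1, h]
  · simp [pascal1, h, Nat.choose_eq_zero_of_lt (not_le.mp h)]

lemma sum_pow_mul_choose_mul_pow_mul_choose (y z : R) (i j : ℕ) :
    ∑ m ∈ range (j + 1), y ^ (m - i) * (m.choose i : R) * (z ^ (j - m) * (j.choose m : R)) =
      (y + z) ^ (j - i) * (j.choose i : R) := by
  rcases lt_or_ge j i with hji | hij
  · refine (sum_eq_zero fun m hm => ?_).trans (by simp [Nat.choose_eq_zero_of_lt hji])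
    rw [Nat.choose_eq_zero_of_lt (by rw [mem_range] at hm; omega)]
    simp
  obtain ⟨d, rfl⟩ := Nat.exists_eq_add_of_le hij
  have hlow : ∑ m ∈ range i,
      y ^ (m - i) * (m.choose i : R) * (z ^ (i + d - m) * ((i + d).choose m : R)) = 0 :=
    sum_eq_zero fun m hm => by rw [Nat.choose_eq_zero_of_lt (mem_range.mp hm)]; simp
  rw [add_assoc, sum_range_add, hlow, zero_add, Nat.add_sub_cancel_left, add_pow, sum_mul]
  refine sum_congr rfl fun t ht => ?_
  have hchoose : (i + d).choose (i + t) * (i + t).choose i = (i + d).choose i * d.choose t := by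
    rw [Nat.choose_mul (Nat.le_add_right i t)]
    simp
  rw [Nat.add_sub_cancel_left, Nat.add_sub_add_left]
  have hchooseR := congrArg (Nat.cast : ℕ → R) hchoose
  push_cast at hchooseR
  linear_combination (y ^ t * z ^ (d - t)) * hchooseR

lemma pascal1_mul (n : ℕ) (y z : R) : pascal1 n y * pascal1 n z = pascal1 n (y + z) := by
  ext i j
  let f : ℕ → R := fun m => y ^ (m - i.val) * (m.choose i.val : R) *
    (z ^ (j.val - m) * (j.val.choose m : R))
  have hsub : range (j.val + 1) ⊆ range n := range_subset_range.mpr j.isLt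
  have hvanish : ∀ m ∈ range n, m ∉ range (j.val + 1) → f m = 0 := fun m _ hm => by
    simp only [f, Nat.choose_eq_zero_of_lt (by simpa using hm : j.val < m)]
    simp
  calc (pascal1 n y * pascal1 n z) i j = ∑ m ∈ range n, f m := by
        simp only [mul_apply, pascal1_apply, f]
        exact Fin.sum_univ_eq_sum_range f n
    _ = ∑ m ∈ range (j.val + 1), f m := (sum_subset hsub hvanish).symm
    _ = pascal1 n (y + z) i j := by
        rw [pascal1_apply]; exact sum_pow_mul_choose_mul_pow_mul_choose y z i j

lemma pascal1_zero (n : ℕ) : pascal1 n (0 : R) = 1 := by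
  ext i j
  rw [pascal1_apply, one_apply, zero_pow_eq]
  rcases lt_trichotomy i j with h | rfl | h
  · simp [h.ne, Nat.sub_ne_zero_of_lt (Fin.lt_def.mp h)]
  · simp
  · simp [h.ne', Nat.choose_eq_zero_of_lt (Fin.lt_def.mp h)]

lemma diagD_mul_diagD (n : ℕ) (a b : R) :
    diagD n a * diagD n b = diagD n (a * b) := by
  simp only [diagD, diagonal_mul_diagonal, mul_pow]

lemma diagD_one (n : ℕ) : diagD n (1 : R) = 1 := by
  simp [diagD]

lemma zhangLiu_eq_diagD_mul_pascal1_mul_diagD (n : ℕ) (y x : R) :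
    zhangLiu n y x = diagD n x * pascal1 n y * diagD n x := by
  ext i j
  by_cases h : i ≤ j
  · simp only [zhangLiu, diagD, pascal1, diagonal_mul, mul_diagonal, of_apply, if_pos h, pow_add]
    ring
  · simp [zhangLiu, diagD, pascal1, h]

lemma zhangLiu_mul (n : ℕ) {x : R} (hx : x * x = 1) (y z : R) :
    zhangLiu n y x * zhangLiu n z x = zhangLiu n (y + z) x := by
  simp only [zhangLiu_eq_diagD_mul_pascal1_mul_diagD, ← pascal1_mul]
  calc diagD n x * pascal1 n y * diagD n x * (diagD n x * pascal1 n z * diagD n x)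
      = diagD n x * pascal1 n y * (diagD n x * diagD n x) * pascal1 n z * diagD n x := by
        simp only [Matrix.mul_assoc]
    _ = diagD n x * (pascal1 n y * pascal1 n z) * diagD n x := by
        rw [diagD_mul_diagD, hx, diagD_one]; simp only [Matrix.mul_one, Matrix.mul_assoc]

lemma zhangLiu_zero (n : ℕ) {x : R} (hx : x * x = 1) : zhangLiu n 0 x = 1 := by
  rw [zhangLiu_eq_diagD_mul_pascal1_mul_diagD, pascal1_zero, Matrix.mul_one, diagD_mul_diagD, hx,
    diagD_one]

lemma zhangLiu_pow (n : ℕ) {x : R} (hx : x * x = 1) (y : R) (k : ℕ) :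
    zhangLiu n y x ^ k = zhangLiu n (k * y) x := by
  induction k with
  | zero => rw [pow_zero, Nat.cast_zero, zero_mul, zhangLiu_zero n hx]
  | succ k ih => rw [pow_succ, ih, zhangLiu_mul n hx, Nat.cast_succ, add_one_mul]

lemma mul_eq_zero_of_zhangLiu_eq_one {n : ℕ} (hn : 2 ≤ n) {y x : R}
    (h : zhangLiu n y x = 1) : y * x = 0 := by
  have h01 := congr_fun (congr_fun h ⟨0, by omega⟩) ⟨1, hn⟩
  simpa [zhangLiu, one_apply] using h01

end

theorem zhangLiu_order_char_p_general {F : Type*} [Field F] (q : ℕ) [CharP F q]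
    (n : ℕ) (hn : 2 ≤ n) (y : F) (hy : y ≠ 0) (x : F) (hx : x = 1 ∨ x = -1) :
    zhangLiu n y x ^ q = 1 ∧ ∀ k : ℕ, 1 ≤ k → k < q → zhangLiu n y x ^ k ≠ 1 := by
  have hxx : x * x = 1 := by rcases hx with rfl | rfl <;> norm_num
  refine ⟨by rw [zhangLiu_pow n hxx, CharP.cast_eq_zero, zero_mul, zhangLiu_zero n hxx], ?_⟩
  intro k hk hkq hQk
  have hk0 : (k : F) ≠ 0 := by
    rw [Ne, CharP.cast_eq_zero_iff F q]
    exact Nat.not_dvd_of_pos_of_lt hk hkq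
  have hx0 : x ≠ 0 := left_ne_zero_of_mul_eq_one hxx
  rw [zhangLiu_pow n hxx] at hQk
  exact mul_ne_zero (mul_ne_zero hk0 hy) hx0 (mul_eq_zero_of_zhangLiu_eq_one hn hQk)

theorem zhangLiu_order_char_p {F : Type*} [Field F] (q : ℕ) (hq : q.Prime) [CharP F q]
    (n : ℕ) (hn : 2 ≤ n) (y : F) (hy : y ≠ 0) (x : F) (hx : x = 1 ∨ x = -1) :
    zhangLiu n y x ^ q = 1 ∧ ∀ k : ℕ, 1 ≤ k → k < q → zhangLiu n y x ^ k ≠ 1 :=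
  zhangLiu_order_char_p_general q n hn y hy x hx
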